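/- Let F₀(x) = 𝟙(x ≥ 0). If F_n is the empirical distribution function of n distinct points X_1, ..., X_n and 𝕂 is the distribution function of a kernel K, with F_n * K_h(x) = (1/n)Σᵢ 𝕂((x - Xᵢ)/h), then liminf_{h→0} d_∞(F_n, F_n * K_h) ≤ κ₀/n, where κ₀ = sup_x |𝕂(x) - F₀(x)|. -/
import Mathlib

open MeasureTheory Set Filter

lemma exists_gap {n : ℕ} (X : Fin n → ℝ) (hX : Function.Injective X) :
    ∃ δ > (0:ℝ), ∀ i j : Fin n, i ≠ j → δ ≤ |X i - X j| := by
  classical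
  set s : Finset (Fin n × Fin n) := Finset.univ.filter (fun p => p.1 ≠ p.2) with hs
  rcases s.eq_empty_or_nonempty with h | h
  · refine ⟨1, one_pos, fun i j hij => ?_⟩
    exfalso
    have : (⟨i, j⟩ : Fin n × Fin n) ∈ s := by simp [hs, hij]
    simp [h] at this
  · refine ⟨s.inf' h (fun p => |X p.1 - X p.2|), ?_, ?_⟩
    · rw [gt_iff_lt, Finset.lt_inf'_iff]
      rintro ⟨i, j⟩ hij
      simp only [hs, Finset.mem_filter] at hij
      have hne : X i ≠ X j := fun hc => hij.2 (hX hc)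
      rw [abs_pos, sub_ne_zero]; exact hne
    · intro i j hij
      have hmem : (⟨i, j⟩ : Fin n × Fin n) ∈ s := by
        simp only [hs, Finset.mem_filter]; exact ⟨Finset.mem_univ _, hij⟩
      exact Finset.inf'_le _ hmem

lemma kk_tendsto_atTop {K 𝕂 : ℝ → ℝ} (hK_int : Integrable K) (hK_prob : ∫ x, K x = 1)
    (h𝕂 : ∀ x, 𝕂 x = ∫ t in Iic x, K t) : Tendsto 𝕂 atTop (nhds 1) := by
  have hrepr : ∀ u : ℝ, 𝕂 u = 𝕂 0 + ∫ t in (0:ℝ)..u, K t := by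
    intro u
    have h := intervalIntegral.integral_Iic_sub_Iic (μ := volume) (f := K) (a := (0:ℝ))
      (b := u) hK_int.integrableOn hK_int.integrableOn
    rw [h𝕂, h𝕂]; linarith
  have h1 : Tendsto (fun u : ℝ => ∫ t in (0:ℝ)..u, K t) atTop
      (nhds (∫ t in Ioi (0:ℝ), K t)) :=
    intervalIntegral_tendsto_integral_Ioi 0 hK_int.integrableOn tendsto_id
  have h2 : 𝕂 0 + ∫ t in Ioi (0:ℝ), K t = 1 := by
    rw [h𝕂]
    rw [intervalIntegral.integral_Iic_add_Ioi hK_int.integrableOn hK_int.integrableOn, hK_prob]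
  have := (tendsto_const_nhds.add h1 : Tendsto (fun u : ℝ => 𝕂 0 + ∫ t in (0:ℝ)..u, K t)
    atTop (nhds (𝕂 0 + ∫ t in Ioi (0:ℝ), K t)))
  rw [h2] at this
  exact this.congr (fun u => (hrepr u).symm)

lemma kk_tendsto_atBot {K 𝕂 : ℝ → ℝ} (hK_int : Integrable K)
    (h𝕂 : ∀ x, 𝕂 x = ∫ t in Iic x, K t) : Tendsto 𝕂 atBot (nhds 0) := by
  have h1 : Tendsto (fun u : ℝ => ∫ t in u..(0:ℝ), K t) atBot
      (nhds (∫ t in Iic (0:ℝ), K t)) :=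
    intervalIntegral_tendsto_integral_Iic 0 hK_int.integrableOn tendsto_id
  have hrepr : ∀ u : ℝ, 𝕂 u = 𝕂 0 - ∫ t in u..(0:ℝ), K t := by
    intro u
    have h := intervalIntegral.integral_Iic_sub_Iic (μ := volume) (f := K) (a := u)
      (b := (0:ℝ)) hK_int.integrableOn hK_int.integrableOn
    rw [h𝕂, h𝕂]; linarith
  have := (tendsto_const_nhds.sub h1 : Tendsto (fun u : ℝ => 𝕂 0 - ∫ t in u..(0:ℝ), K t)
    atBot (nhds (𝕂 0 - ∫ t in Iic (0:ℝ), K t)))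
  rw [show 𝕂 0 - ∫ t in Iic (0:ℝ), K t = 0 by rw [h𝕂]; ring] at this
  exact this.congr (fun u => (hrepr u).symm)

lemma tail_bound {K 𝕂 : ℝ → ℝ} (hK_int : Integrable K) (hK_prob : ∫ x, K x = 1)
    (h𝕂 : ∀ x, 𝕂 x = ∫ t in Iic x, K t) {ε : ℝ} (hε : 0 < ε) :
    ∃ M > (0:ℝ), ∀ u : ℝ, M ≤ |u| → |𝕂 u - (if 0 ≤ u then (1:ℝ) else 0)| ≤ ε := by
  have ht := kk_tendsto_atTop hK_int hK_prob h𝕂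
  have hb := kk_tendsto_atBot hK_int h𝕂
  have h1 : ∀ᶠ u in atTop, |𝕂 u - 1| ≤ ε := by
    filter_upwards [ht.eventually (Metric.closedBall_mem_nhds 1 hε)] with u hu
    simpa [Real.dist_eq] using hu
  have h2 : ∀ᶠ u in atBot, |𝕂 u - 0| ≤ ε := by
    filter_upwards [hb.eventually (Metric.closedBall_mem_nhds 0 hε)] with u hu
    simpa [Real.dist_eq] using hu
  obtain ⟨M₁, hM₁⟩ := eventually_atTop.mp h1
  obtain ⟨M₂, hM₂⟩ := eventually_atBot.mp h2
  refine ⟨max 1 (max |M₁| |M₂|), lt_of_lt_of_le one_pos (le_max_left _ _), fun u hu => ?_⟩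
  by_cases h0 : 0 ≤ u
  · rw [if_pos h0]
    rw [abs_of_nonneg h0] at hu
    exact hM₁ u (le_trans (le_trans (le_abs_self M₁) (le_trans (le_max_left _ _)
      (le_max_right _ _))) hu)
  · rw [if_neg h0]
    push_neg at h0
    rw [abs_of_neg h0] at hu
    have : u ≤ M₂ := by
      have h3 : |M₂| ≤ -u := le_trans (le_trans (le_max_right _ _) (le_max_right _ _)) hu
      have := neg_abs_le M₂
      linarith
    exact hM₂ u this

theorem liminf_discrepancy_le_kappa0_div_n
    (n : ℕ) (hn : 0 < n) (X : Fin n → ℝ) (hX : StrictMono X)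
    (K : ℝ → ℝ) (hK_int : Integrable K) (hK_prob : ∫ x, K x = 1)
    (𝕂 : ℝ → ℝ) (h𝕂 : ∀ x, 𝕂 x = ∫ t in Iic x, K t)
    (Fn : ℝ → ℝ)
    (hFn : ∀ x, Fn x = (1 / (n:ℝ)) * (Finset.univ.filter (fun i => X i ≤ x)).card)
    (Fhat : ℝ → ℝ → ℝ)
    (hFhat : ∀ h x, Fhat h x = (1 / (n:ℝ)) * ∑ i : Fin n, 𝕂 ((x - X i) / h))
    (κ₀ : ℝ) (hκ₀ : κ₀ = ⨆ x : ℝ, |𝕂 x - (if 0 ≤ x then (1:ℝ) else 0)|) :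
    Filter.liminf (fun h : ℝ => ⨆ x : ℝ, |Fn x - Fhat h x|) (nhdsWithin 0 (Ioi 0))
      ≤ κ₀ / n := by
  classical
  have hn0 : ((n:ℝ)) ≠ 0 := Nat.cast_ne_zero.mpr hn.ne'
  have hnpos : (0:ℝ) < n := Nat.cast_pos.mpr hn
  -- κ₀ is a genuine sup (bounded above) and dominates each value
  have hF0bound : ∀ u : ℝ, |𝕂 u - (if 0 ≤ u then (1:ℝ) else 0)| ≤ (∫ t, |K t|) + 1 := by
    intro u
    have h1 : |𝕂 u| ≤ ∫ t, |K t| := by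
      rw [h𝕂]
      calc |∫ t in Iic u, K t| ≤ ∫ t in Iic u, |K t| := by
            simpa [Real.norm_eq_abs] using
              norm_integral_le_integral_norm (μ := volume.restrict (Iic u)) K
        _ ≤ ∫ t, |K t| :=
            setIntegral_le_integral hK_int.abs (Filter.Eventually.of_forall fun t => abs_nonneg _)
    have h2 : |if 0 ≤ u then (1:ℝ) else 0| ≤ 1 := by split <;> simp
    calc |𝕂 u - (if 0 ≤ u then (1:ℝ) else 0)|
        ≤ |𝕂 u| + |if 0 ≤ u then (1:ℝ) else 0| := abs_sub _ _
      _ ≤ (∫ t, |K t|) + 1 := add_le_add h1 h2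
  have hbdd : BddAbove (Set.range fun u : ℝ => |𝕂 u - (if 0 ≤ u then (1:ℝ) else 0)|) := by
    refine ⟨(∫ t, |K t|) + 1, ?_⟩
    rintro y ⟨u, rfl⟩
    exact hF0bound u
  have hκ : ∀ u : ℝ, |𝕂 u - (if 0 ≤ u then (1:ℝ) else 0)| ≤ κ₀ := by
    intro u; rw [hκ₀]; exact le_ciSup hbdd u
  have hκ0 : 0 ≤ κ₀ := le_trans (abs_nonneg _) (hκ 0)
  obtain ⟨δ, hδ, hgap⟩ := exists_gap X hX.injective
  have hbound : IsBoundedUnder (· ≥ ·) (nhdsWithin (0:ℝ) (Ioi 0))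
      (fun h : ℝ => ⨆ x : ℝ, |Fn x - Fhat h x|) :=
    isBoundedUnder_of ⟨0, fun h => Real.iSup_nonneg (fun x => abs_nonneg _)⟩
  refine le_of_forall_pos_le_add (fun ε hε => ?_)
  obtain ⟨M, hM, htail⟩ := tail_bound hK_int hK_prob h𝕂 hε
  have hev : ∀ᶠ h in nhdsWithin (0:ℝ) (Ioi 0),
      (⨆ x : ℝ, |Fn x - Fhat h x|) ≤ κ₀ / n + ε := by
    have hmem : Ioo (0:ℝ) (δ / (2 * M)) ∈ nhdsWithin (0:ℝ) (Ioi 0) :=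
      Ioo_mem_nhdsGT_of_mem ⟨le_refl 0, by positivity⟩
    filter_upwards [hmem] with h hh
    obtain ⟨hh0, hh1⟩ := hh
    have hside : κ₀ / n + ε ≥ 0 :=
      add_nonneg (div_nonneg hκ0 hnpos.le) hε.le
    refine Real.iSup_le (fun x => ?_) hside
    set u : Fin n → ℝ := fun i => (x - X i) / h with hu
    have hFnx : Fn x = (1 / (n:ℝ)) * ∑ i : Fin n, (if 0 ≤ u i then (1:ℝ) else 0) := by
      rw [hFn]
      congr 1
      have hiff : ∀ i : Fin n, (0 ≤ u i) ↔ X i ≤ x := by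
        intro i
        rw [hu]
        simp only
        rw [le_div_iff₀ hh0, zero_mul, sub_nonneg]
      have hcard : (Finset.univ.filter (fun i => X i ≤ x))
          = (Finset.univ.filter (fun i : Fin n => 0 ≤ u i)) := by
        apply Finset.filter_congr
        intro i _
        simp [hiff i]
      rw [hcard, Finset.sum_boole]
    have hdiff : Fn x - Fhat h x
        = (1/(n:ℝ)) * ∑ i : Fin n, ((if 0 ≤ u i then (1:ℝ) else 0) - 𝕂 (u i)) := by
      rw [hFnx, hFhat, Finset.sum_sub_distrib]
      ring
    rw [hdiff, abs_mul, abs_of_nonneg (by positivity : (0:ℝ) ≤ 1/(n:ℝ))]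
    have h2Mh : 2 * M * h < δ := by
      have := (lt_div_iff₀ (by positivity : (0:ℝ) < 2 * M)).mp hh1
      linarith
    have hsum : |∑ i : Fin n, ((if 0 ≤ u i then (1:ℝ) else 0) - 𝕂 (u i))| ≤ κ₀ + n * ε := by
      calc |∑ i : Fin n, ((if 0 ≤ u i then (1:ℝ) else 0) - 𝕂 (u i))|
          ≤ ∑ i : Fin n, |(if 0 ≤ u i then (1:ℝ) else 0) - 𝕂 (u i)| :=
            Finset.abs_sum_le_sum_abs _ _
        _ ≤ ∑ i : Fin n, (if |x - X i| < M * h then κ₀ else ε) := by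
            refine Finset.sum_le_sum fun i _ => ?_
            by_cases hc : |x - X i| < M * h
            · rw [if_pos hc, abs_sub_comm]
              exact hκ (u i)
            · rw [if_neg hc]
              have hMle : M ≤ |u i| := by
                rw [hu]
                simp only
                rw [abs_div, abs_of_pos hh0, le_div_iff₀ hh0]
                exact le_of_not_gt hc
              rw [abs_sub_comm]
              exact htail (u i) hMle
        _ ≤ κ₀ + n * ε := by
            rw [Finset.sum_ite, Finset.sum_const, Finset.sum_const, nsmul_eq_mul, nsmul_eq_mul]
            have hc1 : ((Finset.univ.filter (fun i : Fin n => |x - X i| < M * h)).card : ℝ)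
                ≤ 1 := by
              have : (Finset.univ.filter (fun i : Fin n => |x - X i| < M * h)).card ≤ 1 := by
                rw [Finset.card_le_one]
                intro i hi j hj
                simp only [Finset.mem_filter] at hi hj
                by_contra hij
                have h1 := hgap i j hij
                have h2 : |X i - X j| ≤ |x - X i| + |x - X j| := by
                  calc |X i - X j| = |(x - X j) - (x - X i)| := by ring_nf
                    _ ≤ |x - X j| + |x - X i| := abs_sub _ _
                    _ = |x - X i| + |x - X j| := by ring
                linarith [hi.2, hj.2]
              exact_mod_cast this
            have hc2 : ((Finset.univ.filter
                (fun i : Fin n => ¬ |x - X i| < M * h)).card : ℝ) ≤ n := by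
              have h1 : (Finset.univ.filter
                  (fun i : Fin n => ¬ |x - X i| < M * h)).card ≤ n :=
                le_trans (Finset.card_filter_le _ _) (by simp)
              exact_mod_cast h1
            calc _ ≤ 1 * κ₀ + (n:ℝ) * ε :=
                  add_le_add (mul_le_mul_of_nonneg_right hc1 hκ0)
                    (mul_le_mul_of_nonneg_right hc2 hε.le)
              _ = κ₀ + n * ε := by ring
    calc (1/(n:ℝ)) * |∑ i : Fin n, ((if 0 ≤ u i then (1:ℝ) else 0) - 𝕂 (u i))|
        ≤ (1/(n:ℝ)) * (κ₀ + n * ε) := mul_le_mul_of_nonneg_left hsum (by positivity)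
      _ = κ₀ / n + ε := by field_simp
  exact liminf_le_of_frequently_le hev.frequently hbound
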